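/- For all finite hypergraphs H' and H'', the 2-section of their strong product equals the strong graph product of their 2-sections: [H' ⊠̂ H'']_2 = [H']_2 ⊠ [H'']_2 (equality of simple graphs on V(H')×V(H'')). -/

import Mathlib

/-!
Basic definitions: finite hypergraphs (a finite nonempty vertex set `V`, given by
`[Fintype V] [Nonempty V]`, together with a set of nonempty edges), walks, distance,
connectedness, simplicity, rank, colorings, Helly property, covers,
the various hypergraph products, 2-sections, and graph products.
-/

/-- A hypergraph on a vertex type `V`: a collection of nonempty edges (finite subsets of `V`). -/
structure Hypergraph' (V : Type*) where
  edges : Set (Finset V)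
  nonempty_edges : ∀ e ∈ edges, e.Nonempty

namespace Hypergraph'

variable {V V₁ V₂ : Type*}

/-- There is a walk of length `n` from `u` to `v`: a sequence of vertices `w 0, …, w n`
and edges `f 1, …, f n` with consecutive vertices distinct and both contained
in the corresponding edge. -/
def HasWalk (H : Hypergraph' V) (u v : V) (n : ℕ) : Prop :=
  ∃ (w : Fin (n + 1) → V) (f : Fin n → Finset V),
    w 0 = u ∧ w (Fin.last n) = v ∧
      ∀ i : Fin n, f i ∈ H.edges ∧ w i.castSucc ≠ w i.succ ∧
        w i.castSucc ∈ f i ∧ w i.succ ∈ f i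

/-- The distance between two vertices: the minimum length of a walk joining them,
`⊤ = ∞` if there is none. -/
noncomputable def dist (H : Hypergraph' V) (u v : V) : ℕ∞ :=
  sInf {x : ℕ∞ | ∃ n : ℕ, x = n ∧ H.HasWalk u v n}

/-- A hypergraph is connected if any two vertices are joined by a walk. -/
def Connected (H : Hypergraph' V) : Prop := ∀ u v : V, ∃ n, H.HasWalk u v n

/-- A hypergraph is simple if every edge has at least two vertices and
no edge is contained in another edge. -/
def Simple (H : Hypergraph' V) : Prop :=
  (∀ e ∈ H.edges, 2 ≤ e.card) ∧ ∀ e ∈ H.edges, ∀ f ∈ H.edges, e ⊆ f → e = f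

/-- A hypergraph is loopless if every edge has at least two vertices. -/
def Loopless (H : Hypergraph' V) : Prop := ∀ e ∈ H.edges, 2 ≤ e.card

/-- The rank: the maximum cardinality of an edge. -/
noncomputable def rank (H : Hypergraph' V) : ℕ := sSup (Finset.card '' H.edges)

/-- The anti-rank: the minimum cardinality of an edge. -/
noncomputable def antirank (H : Hypergraph' V) : ℕ := sInf (Finset.card '' H.edges)

/-- A proper coloring: no color class contains an edge. -/
def IsProperColoring (H : Hypergraph' V) {k : ℕ} (c : V → Fin k) : Prop :=
  ∀ e ∈ H.edges, ∀ i : Fin k, ¬ ∀ v ∈ e, c v = i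

/-- A proper strong coloring: a proper coloring in which the vertices of every
edge receive pairwise distinct colors. -/
def IsStrongColoring (H : Hypergraph' V) {k : ℕ} (c : V → Fin k) : Prop :=
  H.IsProperColoring c ∧ ∀ e ∈ H.edges, ∀ u ∈ e, ∀ v ∈ e, u ≠ v → c u ≠ c v

/-- The chromatic number: the least `k` admitting a proper `k`-coloring. -/
noncomputable def chromaticNumber (H : Hypergraph' V) : ℕ :=
  sInf {k : ℕ | ∃ c : V → Fin k, H.IsProperColoring c}

/-- The strong chromatic number: the least `k` admitting a proper strong `k`-coloring. -/
noncomputable def strongChromaticNumber (H : Hypergraph' V) : ℕ :=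
  sInf {k : ℕ | ∃ c : V → Fin k, H.IsStrongColoring c}

/-- The Helly property: every intersecting family of edges is a star. -/
def Helly (H : Hypergraph' V) : Prop :=
  ∀ E' ⊆ H.edges, (∀ e ∈ E', ∀ f ∈ E', ∃ x, x ∈ e ∧ x ∈ f) → ∃ v, ∀ e ∈ E', v ∈ e

/-- The covering number: the minimum cardinality of a set of vertices meeting every edge. -/
noncomputable def coverNumber (H : Hypergraph' V) : ℕ :=
  sInf {k : ℕ | ∃ T : Finset V, T.card = k ∧ ∀ e ∈ H.edges, ∃ v ∈ T, v ∈ e}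

/-- The Cartesian product of hypergraphs. -/
def cartProd (H₁ : Hypergraph' V₁) (H₂ : Hypergraph' V₂) : Hypergraph' (V₁ × V₂) where
  edges := {E | (∃ x, ∃ f ∈ H₂.edges, E = {x} ×ˢ f) ∨ ∃ e ∈ H₁.edges, ∃ y, E = e ×ˢ {y}}
  nonempty_edges := by
    rintro E (⟨x, f, hf, rfl⟩ | ⟨e, he, y, rfl⟩)
    · exact (Finset.singleton_nonempty x).product (H₂.nonempty_edges f hf)
    · exact (H₁.nonempty_edges e he).product (Finset.singleton_nonempty y)

section Products

variable [DecidableEq V₁] [DecidableEq V₂]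

/-- The minimal-rank-preserving direct product `H₁ ×̌ H₂`. -/
def minDirProd (H₁ : Hypergraph' V₁) (H₂ : Hypergraph' V₂) : Hypergraph' (V₁ × V₂) where
  edges := {E | ∃ e₁ ∈ H₁.edges, ∃ e₂ ∈ H₂.edges,
    E ⊆ e₁ ×ˢ e₂ ∧ E.card = min e₁.card e₂.card ∧
      (E.image Prod.fst).card = min e₁.card e₂.card ∧
      (E.image Prod.snd).card = min e₁.card e₂.card}
  nonempty_edges := by
    rintro E ⟨e₁, h₁, e₂, h₂, -, hc, -, -⟩
    rw [← Finset.card_pos, hc]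
    exact lt_min (Finset.card_pos.mpr (H₁.nonempty_edges e₁ h₁))
      (Finset.card_pos.mpr (H₂.nonempty_edges e₂ h₂))

/-- The maximal-rank-preserving direct product `H₁ ×̂ H₂`. -/
def maxDirProd (H₁ : Hypergraph' V₁) (H₂ : Hypergraph' V₂) : Hypergraph' (V₁ × V₂) where
  edges := {E | ∃ e₁ ∈ H₁.edges, ∃ e₂ ∈ H₂.edges,
    E ⊆ e₁ ×ˢ e₂ ∧ E.card = max e₁.card e₂.card ∧
      E.image Prod.fst = e₁ ∧ E.image Prod.snd = e₂}
  nonempty_edges := by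
    rintro E ⟨e₁, h₁, e₂, h₂, -, hc, -, -⟩
    rw [← Finset.card_pos, hc]
    exact lt_max_iff.mpr (Or.inl (Finset.card_pos.mpr (H₁.nonempty_edges e₁ h₁)))

/-- The non-rank-preserving direct product `H₁ ×̃ H₂`. -/
def nrDirProd (H₁ : Hypergraph' V₁) (H₂ : Hypergraph' V₂) : Hypergraph' (V₁ × V₂) where
  edges := {E | ∃ e ∈ H₁.edges, ∃ f ∈ H₂.edges, ∃ x ∈ e, ∃ y ∈ f,
    E = insert (x, y) ((e.erase x) ×ˢ (f.erase y))}
  nonempty_edges := by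
    rintro E ⟨e, -, f, -, x, -, y, -, rfl⟩
    exact Finset.insert_nonempty _ _

/-- The normal product `H₁ ⊠̌ H₂`: union of the Cartesian product edges and the
minimal-rank-preserving direct product edges. -/
def normalProd (H₁ : Hypergraph' V₁) (H₂ : Hypergraph' V₂) : Hypergraph' (V₁ × V₂) where
  edges := (H₁.cartProd H₂).edges ∪ (H₁.minDirProd H₂).edges
  nonempty_edges := by
    rintro E (h | h)
    · exact (H₁.cartProd H₂).nonempty_edges E h
    · exact (H₁.minDirProd H₂).nonempty_edges E h

/-- The strong product `H₁ ⊠̂ H₂`: union of the Cartesian product edges and the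
maximal-rank-preserving direct product edges. -/
def strongProd (H₁ : Hypergraph' V₁) (H₂ : Hypergraph' V₂) : Hypergraph' (V₁ × V₂) where
  edges := (H₁.cartProd H₂).edges ∪ (H₁.maxDirProd H₂).edges
  nonempty_edges := by
    rintro E (h | h)
    · exact (H₁.cartProd H₂).nonempty_edges E h
    · exact (H₁.maxDirProd H₂).nonempty_edges E h

/-- The lexicographic product `H₁ ∘ H₂`. -/
def lexProd (H₁ : Hypergraph' V₁) (H₂ : Hypergraph' V₂) : Hypergraph' (V₁ × V₂) where
  edges := {E | (E.image Prod.fst ∈ H₁.edges ∧ (E.image Prod.fst).card = E.card) ∨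
    ∃ x, ∃ e₂ ∈ H₂.edges, E = {x} ×ˢ e₂}
  nonempty_edges := by
    rintro E (⟨h₁, hc⟩ | ⟨x, e₂, h₂, rfl⟩)
    · rw [← Finset.card_pos, ← hc]
      exact Finset.card_pos.mpr (H₁.nonempty_edges _ h₁)
    · exact (Finset.singleton_nonempty x).product (H₂.nonempty_edges e₂ h₂)

end Products

/-- The square product `H₁ ■ H₂`. -/
def squareProd (H₁ : Hypergraph' V₁) (H₂ : Hypergraph' V₂) : Hypergraph' (V₁ × V₂) where
  edges := {E | ∃ e₁ ∈ H₁.edges, ∃ e₂ ∈ H₂.edges, E = e₁ ×ˢ e₂}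
  nonempty_edges := by
    rintro E ⟨e₁, h₁, e₂, h₂, rfl⟩
    exact (H₁.nonempty_edges e₁ h₁).product (H₂.nonempty_edges e₂ h₂)

/-- The 2-section of a hypergraph: distinct vertices are adjacent iff they lie
in a common edge. -/
def twoSection (H : Hypergraph' V) : SimpleGraph V where
  Adj x y := x ≠ y ∧ ∃ e ∈ H.edges, x ∈ e ∧ y ∈ e
  symm := by constructor; rintro x y ⟨hxy, e, he, hx, hy⟩; exact ⟨hxy.symm, e, he, hy, hx⟩
  loopless := by constructor; rintro x ⟨hx, -⟩; exact hx rfl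

end Hypergraph'

namespace SimpleGraph

variable {V₁ V₂ : Type*}

/-- The direct (tensor) product of simple graphs. -/
def directProd (G₁ : SimpleGraph V₁) (G₂ : SimpleGraph V₂) : SimpleGraph (V₁ × V₂) where
  Adj x y := G₁.Adj x.1 y.1 ∧ G₂.Adj x.2 y.2
  symm := ⟨fun _ _ ⟨h₁, h₂⟩ => ⟨h₁.symm, h₂.symm⟩⟩
  loopless := ⟨fun x h => h.1.ne rfl⟩

/-- The strong product of simple graphs. -/
def strongGraphProd (G₁ : SimpleGraph V₁) (G₂ : SimpleGraph V₂) : SimpleGraph (V₁ × V₂) where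
  Adj x y := x ≠ y ∧ ((x.1 = y.1 ∧ G₂.Adj x.2 y.2) ∨ (x.2 = y.2 ∧ G₁.Adj x.1 y.1) ∨
    (G₁.Adj x.1 y.1 ∧ G₂.Adj x.2 y.2))
  symm := by
    constructor
    rintro x y ⟨hne, (⟨h, h'⟩ | ⟨h, h'⟩ | ⟨h, h'⟩)⟩
    · exact ⟨hne.symm, Or.inl ⟨h.symm, h'.symm⟩⟩
    · exact ⟨hne.symm, Or.inr (Or.inl ⟨h.symm, h'.symm⟩)⟩
    · exact ⟨hne.symm, Or.inr (Or.inr ⟨h.symm, h'.symm⟩)⟩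
  loopless := by constructor; rintro x ⟨hx, -⟩; exact hx rfl

/-- The lexicographic product of simple graphs. -/
def lexGraphProd (G₁ : SimpleGraph V₁) (G₂ : SimpleGraph V₂) : SimpleGraph (V₁ × V₂) where
  Adj x y := G₁.Adj x.1 y.1 ∨ (x.1 = y.1 ∧ G₂.Adj x.2 y.2)
  symm := by
    constructor
    rintro x y (h | ⟨h, h'⟩)
    · exact Or.inl h.symm
    · exact Or.inr ⟨h.symm, h'.symm⟩
  loopless := by
    constructor
    rintro x (h | ⟨-, h⟩)
    · exact h.ne rfl
    · exact h.ne rfl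

end SimpleGraph

/-!
Two distinct vertices whose coordinates are equal or adjacent in the respective 2-sections lie
in a common edge of the strong product. The only nontrivial case is a diagonal pair
`(x₁, x₂), (y₁, y₂)` with `x₁ ≠ y₁` in an edge `e₁` and `x₂ ≠ y₂` in an edge `e₂`, say
`|e₁| ≤ |e₂|`: then the graph of a surjection `e₂ → e₁` sending `x₂ ↦ x₁` and `y₂ ↦ y₁` is an
edge of `H₁ ×̂ H₂` through both points. Conversely the projections of any edge of the strong
product lie in edges of the factors or are single points.
-/

open Finset Function

theorem Function.Surjective.exists_surjective_apply_eq {α β : Type*} {f : α → β}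
    (hf : Surjective f) (a : α) (b : β) :
    ∃ g : α → β, Surjective g ∧ g a = b ∧ ∀ x, x ≠ a → f x ≠ b → g x = f x := by
  classical
  obtain ⟨c, rfl⟩ := hf b
  refine ⟨f ∘ Equiv.swap c a, hf.comp (Equiv.swap c a).surjective, by simp, fun x hxa hxc => ?_⟩
  have hxc : x ≠ c := fun h => hxc (congrArg f h)
  simp [Equiv.swap_apply_of_ne_of_ne hxc hxa]

theorem Fintype.exists_surjective_apply_eq_apply_eq {α β : Type*} [Fintype α] [Fintype β]
    (h : Fintype.card β ≤ Fintype.card α) {a₁ a₂ : α} {b₁ b₂ : β}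
    (ha : a₁ ≠ a₂) (hb : b₁ ≠ b₂) :
    ∃ f : α → β, Surjective f ∧ f a₁ = b₁ ∧ f a₂ = b₂ := by
  obtain ⟨e⟩ := Function.Embedding.nonempty_of_card_le h
  have : Nonempty β := ⟨b₁⟩
  obtain ⟨f₁, hf₁, h₁, -⟩ := (invFun_surjective e.injective).exists_surjective_apply_eq a₁ b₁
  obtain ⟨f, hf, h₂, hf_eq_f₁⟩ := hf₁.exists_surjective_apply_eq a₂ b₂
  exact ⟨f, hf, (hf_eq_f₁ a₁ ha (h₁ ▸ hb)).trans h₁, h₂⟩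

theorem SimpleGraph.strongGraphProd_adj {V₁ V₂ : Type*} {G₁ : SimpleGraph V₁}
    {G₂ : SimpleGraph V₂} {p q : V₁ × V₂} :
    (G₁.strongGraphProd G₂).Adj p q ↔
      p ≠ q ∧ (p.1 = q.1 ∨ G₁.Adj p.1 q.1) ∧ (p.2 = q.2 ∨ G₂.Adj p.2 q.2) := by
  grind [strongGraphProd, Prod.ext_iff]

namespace Hypergraph'

variable {V V₁ V₂ : Type*}

theorem eq_or_twoSection_adj_of_mem {H : Hypergraph' V} {e : Finset V} (he : e ∈ H.edges)
    {x y : V} (hx : x ∈ e) (hy : y ∈ e) : x = y ∨ H.twoSection.Adj x y :=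
  or_iff_not_imp_left.2 fun hne => ⟨hne, e, he, hx, hy⟩

variable [DecidableEq V₁] [DecidableEq V₂] {H₁ : Hypergraph' V₁} {H₂ : Hypergraph' V₂}

theorem image_mem_maxDirProd_edges {ι : Type*} [Fintype ι] {e₁ : Finset V₁} {e₂ : Finset V₂}
    (he₁ : e₁ ∈ H₁.edges) (he₂ : e₂ ∈ H₂.edges) {p : ι → e₁} {q : ι → e₂}
    (hp : Surjective p) (hq : Surjective q) (hpq : Injective fun i => ((p i : V₁), (q i : V₂)))
    (hcard : Fintype.card ι = max e₁.card e₂.card) :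
    univ.image (fun i => ((p i : V₁), (q i : V₂))) ∈ (H₁.maxDirProd H₂).edges := by
  refine ⟨e₁, he₁, e₂, he₂, ?_, ?_, ?_, ?_⟩
  · simp [subset_iff]
  · rw [card_image_of_injective _ hpq, card_univ, hcard]
  · rw [image_image, show Prod.fst ∘ _ = Subtype.val ∘ p from rfl, ← image_image,
      image_univ_of_surjective hp]
    simp
  · rw [image_image, show Prod.snd ∘ _ = Subtype.val ∘ q from rfl, ← image_image,
      image_univ_of_surjective hq]
    simp

theorem exists_mem_maxDirProd_edges {x₁ y₁ : V₁} {x₂ y₂ : V₂} (h₁ : H₁.twoSection.Adj x₁ y₁)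
    (h₂ : H₂.twoSection.Adj x₂ y₂) :
    ∃ E ∈ (H₁.maxDirProd H₂).edges, (x₁, x₂) ∈ E ∧ (y₁, y₂) ∈ E := by
  obtain ⟨hne₁, e₁, he₁, hx₁, hy₁⟩ := h₁
  obtain ⟨hne₂, e₂, he₂, hx₂, hy₂⟩ := h₂
  rcases le_total e₁.card e₂.card with hc | hc
  · obtain ⟨f, hf, hfx, hfy⟩ := Fintype.exists_surjective_apply_eq_apply_eq
      (α := e₂) (β := e₁) (by simpa using hc) (a₁ := ⟨x₂, hx₂⟩) (a₂ := ⟨y₂, hy₂⟩)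
      (b₁ := ⟨x₁, hx₁⟩) (b₂ := ⟨y₁, hy₁⟩) (Subtype.coe_ne_coe.1 hne₂) (Subtype.coe_ne_coe.1 hne₁)
    refine ⟨_, image_mem_maxDirProd_edges he₁ he₂ hf surjective_id
      (fun i j h => Subtype.ext (congrArg Prod.snd h)) (by simpa using hc),
      mem_image.2 ⟨⟨x₂, hx₂⟩, mem_univ _, by simp [hfx]⟩,
      mem_image.2 ⟨⟨y₂, hy₂⟩, mem_univ _, by simp [hfy]⟩⟩
  · obtain ⟨f, hf, hfx, hfy⟩ := Fintype.exists_surjective_apply_eq_apply_eq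
      (α := e₁) (β := e₂) (by simpa using hc) (a₁ := ⟨x₁, hx₁⟩) (a₂ := ⟨y₁, hy₁⟩)
      (b₁ := ⟨x₂, hx₂⟩) (b₂ := ⟨y₂, hy₂⟩) (Subtype.coe_ne_coe.1 hne₁) (Subtype.coe_ne_coe.1 hne₂)
    refine ⟨_, image_mem_maxDirProd_edges he₁ he₂ surjective_id hf
      (fun i j h => Subtype.ext (congrArg Prod.fst h)) (by simpa using hc),
      mem_image.2 ⟨⟨x₁, hx₁⟩, mem_univ _, by simp [hfx]⟩,
      mem_image.2 ⟨⟨y₁, hy₁⟩, mem_univ _, by simp [hfy]⟩⟩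

theorem eq_or_twoSection_adj_of_mem_strongProd_edges {E : Finset (V₁ × V₂)}
    (hE : E ∈ (H₁.strongProd H₂).edges) {p q : V₁ × V₂} (hp : p ∈ E) (hq : q ∈ E) :
    (p.1 = q.1 ∨ H₁.twoSection.Adj p.1 q.1) ∧ (p.2 = q.2 ∨ H₂.twoSection.Adj p.2 q.2) := by
  rcases hE with (⟨x, f, hf, rfl⟩ | ⟨e, he, y, rfl⟩) | ⟨e₁, he₁, e₂, he₂, hsub, -⟩
  · simp only [mem_product, mem_singleton] at hp hq
    exact ⟨.inl (hp.1.trans hq.1.symm), eq_or_twoSection_adj_of_mem hf hp.2 hq.2⟩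
  · simp only [mem_product, mem_singleton] at hp hq
    exact ⟨eq_or_twoSection_adj_of_mem he hp.1 hq.1, .inl (hp.2.trans hq.2.symm)⟩
  · have hp := mem_product.1 (hsub hp)
    have hq := mem_product.1 (hsub hq)
    exact ⟨eq_or_twoSection_adj_of_mem he₁ hp.1 hq.1, eq_or_twoSection_adj_of_mem he₂ hp.2 hq.2⟩

theorem exists_mem_strongProd_edges {p q : V₁ × V₂} (hne : p ≠ q)
    (h₁ : p.1 = q.1 ∨ H₁.twoSection.Adj p.1 q.1) (h₂ : p.2 = q.2 ∨ H₂.twoSection.Adj p.2 q.2) :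
    ∃ E ∈ (H₁.strongProd H₂).edges, p ∈ E ∧ q ∈ E := by
  obtain ⟨p₁, p₂⟩ := p
  obtain ⟨q₁, q₂⟩ := q
  rcases h₁ with rfl | h₁ <;> rcases h₂ with rfl | h₂
  · exact absurd rfl hne
  · obtain ⟨-, e, he, hp, hq⟩ := h₂
    exact ⟨{p₁} ×ˢ e, .inl (.inl ⟨p₁, e, he, rfl⟩), by simp [hp], by simp [hq]⟩
  · obtain ⟨-, e, he, hp, hq⟩ := h₁
    exact ⟨e ×ˢ {p₂}, .inl (.inr ⟨e, he, p₂, rfl⟩), by simp [hp], by simp [hq]⟩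
  · obtain ⟨E, hE, hp, hq⟩ := exists_mem_maxDirProd_edges h₁ h₂
    exact ⟨E, .inr hE, hp, hq⟩

end Hypergraph'

theorem twoSection_strongProd_general {V₁ V₂ : Type*} [DecidableEq V₁]
    [DecidableEq V₂] (H₁ : Hypergraph' V₁) (H₂ : Hypergraph' V₂) :
    (H₁.strongProd H₂).twoSection =
      SimpleGraph.strongGraphProd H₁.twoSection H₂.twoSection := by
  ext p q
  rw [SimpleGraph.strongGraphProd_adj]
  refine and_congr_right fun hne => ⟨?_, fun ⟨h₁, h₂⟩ => ?_⟩
  · rintro ⟨E, hE, hp, hq⟩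
    exact Hypergraph'.eq_or_twoSection_adj_of_mem_strongProd_edges hE hp hq
  · exact Hypergraph'.exists_mem_strongProd_edges hne h₁ h₂

/-- the 2-section of the strong product is the strong product of the
2-sections. -/
theorem twoSection_strongProd {V₁ V₂ : Type*} [Fintype V₁] [Nonempty V₁] [DecidableEq V₁]
    [Fintype V₂] [Nonempty V₂] [DecidableEq V₂] (H₁ : Hypergraph' V₁) (H₂ : Hypergraph' V₂) :
    (H₁.strongProd H₂).twoSection =
      SimpleGraph.strongGraphProd H₁.twoSection H₂.twoSection :=
  twoSection_strongProd_general H₁ H₂
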